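/- Let λ, μ, q > 0 and C_U > u > 0, s ∈ (0,1), and consider the Markov chain on ℕ³ (coordinates (r, ℓ, q̃)) with transitions x → x + e_R − e_L at rate κLR(C_U − u)·ℓ, x → x + e_R at rate κSR·s, x → x − e_R at rate (κRS·u + κRI(C_M − 1 + s))·r, x → x + e_L at rate κIL(1 − s), x → x + e_Q at rate κ0Q, and x → x − e_Q at rate κQU·u·q̃, where all κ's and C_M − 1 + s are positive. Then the product measure Poisson((κIL(1−s) + κSR·s)/(κRI(C_M − (1−s)) + κRS·u)) ⊗ Poisson(κIL(1−s)/(κLR(C_U − u))) ⊗ Poisson(κ0Q/(κQU·u)) is invariant for this chain. -/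

import Mathlib

/-!
Each coordinate is an immigration–death chain, and `Poisson(λ / c)` satisfies detailed balance
for immigration at rate `λ` and per-capita death at rate `c`: `c (n + 1) π(n + 1) = λ π(n)`.
The only coupling is the transfer `L → R`: by detailed balance in `ℓ`, the transfer flux
`κLR(C_U - u)(ℓ + 1) π_L(ℓ + 1)` equals `κIL(1 - s) π_L(ℓ)`, so node `R` effectively sees
immigration at rate `κIL(1 - s) + κSR s`, and global balance of the product measure reduces
to the one-dimensional identities.
-/

open Real

noncomputable def poissonP (a : ℝ) (x : ℕ) : ℝ := exp (-a) * a ^ x / (Nat.factorial x)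

lemma poissonP_succ_mul (a : ℝ) (n : ℕ) :
    ((n : ℝ) + 1) * poissonP a (n + 1) = a * poissonP a n := by
  simp only [poissonP, Nat.factorial_succ, Nat.cast_mul, Nat.cast_succ]
  field_simp
  ring

lemma poissonP_div_balance_succ {lam c : ℝ} (hc : c ≠ 0) (n : ℕ) :
    c * ((n : ℝ) + 1) * poissonP (lam / c) (n + 1) = lam * poissonP (lam / c) n := by
  rw [mul_assoc, poissonP_succ_mul]
  field_simp

lemma poissonP_div_balance_pred {lam c : ℝ} (hc : c ≠ 0) (n : ℕ) :
    (if n = 0 then 0 else lam * poissonP (lam / c) (n - 1))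
      = c * n * poissonP (lam / c) n := by
  rcases n with _ | n
  · simp
  · rw [if_neg n.succ_ne_zero, Nat.add_sub_cancel, ← poissonP_div_balance_succ hc, Nat.cast_succ]

theorem stmt18_general (κLR κSR κRS κRI κIL κ0Q κQU C_M C_U u s : ℝ)
    (hκLR : 0 < κLR) (hκRS : 0 < κRS) (hκRI : 0 < κRI)
    (hκQU : 0 < κQU)
    (hu : 0 < u) (huC : u < C_U)
    (hCM : 0 < C_M - 1 + s)
    (πR πL πQ : ℕ → ℝ)
    (hπR : πR = poissonP ((κIL * (1 - s) + κSR * s)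
        / (κRI * (C_M - (1 - s)) + κRS * u)))
    (hπL : πL = poissonP (κIL * (1 - s) / (κLR * (C_U - u))))
    (hπQ : πQ = poissonP (κ0Q / (κQU * u)))
    (y : ℕ × ℕ × ℕ) :
    (if y.1 = 0 then 0 else
        κLR * (C_U - u) * (y.2.1 + 1) * (πR (y.1 - 1) * πL (y.2.1 + 1) * πQ y.2.2))
    + (if y.1 = 0 then 0 else
        κSR * s * (πR (y.1 - 1) * πL y.2.1 * πQ y.2.2))
    + (κRS * u + κRI * (C_M - 1 + s)) * (y.1 + 1)
        * (πR (y.1 + 1) * πL y.2.1 * πQ y.2.2)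
    + (if y.2.1 = 0 then 0 else
        κIL * (1 - s) * (πR y.1 * πL (y.2.1 - 1) * πQ y.2.2))
    + (if y.2.2 = 0 then 0 else
        κ0Q * (πR y.1 * πL y.2.1 * πQ (y.2.2 - 1)))
    + κQU * u * (y.2.2 + 1) * (πR y.1 * πL y.2.1 * πQ (y.2.2 + 1))
    = (κLR * (C_U - u) * y.2.1 + κSR * s
        + (κRS * u + κRI * (C_M - 1 + s)) * y.1
        + κIL * (1 - s) + κ0Q + κQU * u * y.2.2)
      * (πR y.1 * πL y.2.1 * πQ y.2.2) := by
  obtain ⟨r, l, q⟩ := y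
  rw [show κRI * (C_M - (1 - s)) + κRS * u = κRS * u + κRI * (C_M - 1 + s) by ring] at hπR
  have hR : κRS * u + κRI * (C_M - 1 + s) ≠ 0 := by positivity
  have hL : κLR * (C_U - u) ≠ 0 := (mul_pos hκLR (sub_pos.2 huC)).ne'
  have hQ : κQU * u ≠ 0 := by positivity
  have departR := poissonP_div_balance_succ (lam := κIL * (1 - s) + κSR * s) hR r
  have arriveR := poissonP_div_balance_pred (lam := κIL * (1 - s) + κSR * s) hR r
  have transferL := poissonP_div_balance_succ (lam := κIL * (1 - s)) hL l
  have arriveL := poissonP_div_balance_pred (lam := κIL * (1 - s)) hL l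
  have departQ := poissonP_div_balance_succ (lam := κ0Q) hQ q
  have arriveQ := poissonP_div_balance_pred (lam := κ0Q) hQ q
  rw [← hπR] at departR arriveR
  rw [← hπL] at transferL arriveL
  rw [← hπQ] at departQ arriveQ
  have inflowR : (if r = 0 then 0 else
        κLR * (C_U - u) * (l + 1) * (πR (r - 1) * πL (l + 1) * πQ q))
      + (if r = 0 then 0 else κSR * s * (πR (r - 1) * πL l * πQ q))
      = (if r = 0 then 0 else (κIL * (1 - s) + κSR * s) * πR (r - 1)) * (πL l * πQ q) := by
    split_ifs
    · ring
    · linear_combination (πR (r - 1) * πQ q) * transferL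
  have inflowL : (if l = 0 then 0 else κIL * (1 - s) * (πR r * πL (l - 1) * πQ q))
      = (if l = 0 then 0 else κIL * (1 - s) * πL (l - 1)) * (πR r * πQ q) := by
    split_ifs <;> ring
  have inflowQ : (if q = 0 then 0 else κ0Q * (πR r * πL l * πQ (q - 1)))
      = (if q = 0 then 0 else κ0Q * πQ (q - 1)) * (πR r * πL l) := by
    split_ifs <;> ring
  linear_combination inflowR + inflowL + inflowQ + (πL l * πQ q) * (arriveR + departR)
    + (πR r * πQ q) * arriveL + (πR r * πL l) * (arriveQ + departQ)

/-- Invariant product Poisson measure for the frozen fast process of the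
optimal sequestration regime (formula (4.3) of Theorem 4.2): chain on `ℕ³`
(coordinates `(r, ℓ, q̃)`) with transitions `x → x + e_R − e_L` at rate
`κLR(C_U−u)·ℓ`, `x → x + e_R` at rate `κSR·s`, `x → x − e_R` at rate
`(κRS·u + κRI(C_M−1+s))·r`, `x → x + e_L` at rate `κIL(1−s)`, `x → x + e_Q`
at rate `κ0Q`, `x → x − e_Q` at rate `κQU·u·q̃`; global balance at every
state. -/
theorem stmt18 (κLR κSR κRS κRI κIL κ0Q κQU C_M C_U u s : ℝ)
    (hκLR : 0 < κLR) (hκSR : 0 < κSR) (hκRS : 0 < κRS) (hκRI : 0 < κRI)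
    (hκIL : 0 < κIL) (hκ0Q : 0 < κ0Q) (hκQU : 0 < κQU)
    (hu : 0 < u) (huC : u < C_U) (hs : s ∈ Set.Ioo (0 : ℝ) 1)
    (hCM : 0 < C_M - 1 + s)
    (πR πL πQ : ℕ → ℝ)
    (hπR : πR = poissonP ((κIL * (1 - s) + κSR * s)
        / (κRI * (C_M - (1 - s)) + κRS * u)))
    (hπL : πL = poissonP (κIL * (1 - s) / (κLR * (C_U - u))))
    (hπQ : πQ = poissonP (κ0Q / (κQU * u)))
    (y : ℕ × ℕ × ℕ) :
    (if y.1 = 0 then 0 else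
        κLR * (C_U - u) * (y.2.1 + 1) * (πR (y.1 - 1) * πL (y.2.1 + 1) * πQ y.2.2))
    + (if y.1 = 0 then 0 else
        κSR * s * (πR (y.1 - 1) * πL y.2.1 * πQ y.2.2))
    + (κRS * u + κRI * (C_M - 1 + s)) * (y.1 + 1)
        * (πR (y.1 + 1) * πL y.2.1 * πQ y.2.2)
    + (if y.2.1 = 0 then 0 else
        κIL * (1 - s) * (πR y.1 * πL (y.2.1 - 1) * πQ y.2.2))
    + (if y.2.2 = 0 then 0 else
        κ0Q * (πR y.1 * πL y.2.1 * πQ (y.2.2 - 1)))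
    + κQU * u * (y.2.2 + 1) * (πR y.1 * πL y.2.1 * πQ (y.2.2 + 1))
    = (κLR * (C_U - u) * y.2.1 + κSR * s
        + (κRS * u + κRI * (C_M - 1 + s)) * y.1
        + κIL * (1 - s) + κ0Q + κQU * u * y.2.2)
      * (πR y.1 * πL y.2.1 * πQ y.2.2) :=
  stmt18_general κLR κSR κRS κRI κIL κ0Q κQU C_M C_U u s hκLR hκRS hκRI hκQU hu huC hCM πR πL πQ hπR
    hπL hπQ y
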